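/- arXiv:2602.01953 — 6 statements merged into one kernel-verified Lean document; each statement's English description precedes it below -/
import Mathlib

section
/- Let 𝒳 be a nonempty finite set, let p(x|x') be a strictly positive Markov kernel on 𝒳 with a strictly positive stationary distribution p(x), let q(x'|x) be a strictly positive Markov kernel on 𝒳 and let q₁ be a probability distribution on 𝒳. Then for every n ≥ 1, the likelihood L = Σ_x q₁(x) log p(x) satisfies L ≥ L_B(n), where L_B(n) = Σ_x q_{n+1}(x) log p(x) + n Σ_{x,x'} q(x'|x) Q_n(x) [log p(x|x') − log q(x'|x)]. -/
open Finset

/-- `qIter q q1 k` is the distribution `q_{k+1}` obtained from the data distribution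
`q₁ = qIter q q1 0` by `k` applications of the Markov kernel `q`,
where `q x x'` denotes `q(x | x')`, i.e. the transition probability from `x'` to `x`. -/
noncomputable def qIter {X : Type} [Fintype X] (q : X → X → ℝ) (q1 : X → ℝ) : ℕ → X → ℝ
  | 0 => q1
  | k + 1 => fun x => ∑ x' : X, q x x' * qIter q q1 k x'

/-- `Qavg q q1 n x = Q_n(x) = (1/n) ∑_{k=1}^n q_k(x)`. -/
noncomputable def Qavg {X : Type} [Fintype X] (q : X → X → ℝ) (q1 : X → ℝ) (n : ℕ) (x : X) : ℝ :=
  (1 / (n : ℝ)) * ∑ k ∈ Finset.range n, qIter q q1 k x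

/-- the likelihood `L = ∑_x q₁(x) log p(x)` dominates the recurrent lower
bound `L_B(n)` for every `n ≥ 1`.  Here `p x x' = p(x|x')` is a strictly positive Markov
kernel with strictly positive stationary distribution `pd`, `q x' x = q(x'|x)` is a
strictly positive Markov kernel and `q1` is a probability distribution on `X`. -/
theorem lower_bound_le_likelihood
    {X : Type} [Fintype X] [Nonempty X]
    (p : X → X → ℝ) (pd : X → ℝ) (q : X → X → ℝ) (q1 : X → ℝ)
    (hp_pos : ∀ x x' : X, 0 < p x x')
    (hp_kernel : ∀ x' : X, ∑ x : X, p x x' = 1)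
    (hpd_pos : ∀ x, 0 < pd x)
    (hpd_sum : ∑ x : X, pd x = 1)
    (hpd_stat : ∀ x, pd x = ∑ x' : X, p x x' * pd x')
    (hq_pos : ∀ x' x : X, 0 < q x' x)
    (hq_kernel : ∀ x : X, ∑ x' : X, q x' x = 1)
    (hq1_nonneg : ∀ x, 0 ≤ q1 x)
    (hq1_sum : ∑ x : X, q1 x = 1)
    (n : ℕ) (hn : 1 ≤ n) :
    ∑ x : X, qIter q q1 n x * Real.log (pd x)
        + (n : ℝ) * ∑ x : X, ∑ x' : X,
            q x' x * Qavg q q1 n x * (Real.log (p x x') - Real.log (q x' x))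
      ≤ ∑ x : X, q1 x * Real.log (pd x) := by
  -- nonnegativity of the iterates
  have hqI_nonneg : ∀ k x, 0 ≤ qIter q q1 k x := by
    intro k
    induction k with
    | zero => exact hq1_nonneg
    | succ k ih =>
      intro x
      exact Finset.sum_nonneg fun x' _ => mul_nonneg (hq_pos x x').le (ih x')
  -- Jensen / ELBO step pointwise
  have jensen : ∀ x : X,
      ∑ x' : X, q x' x * Real.log (p x x' * pd x' / q x' x) ≤ Real.log (pd x) := by
    intro x
    have hmem : ∀ x' ∈ (Finset.univ : Finset X),
        p x x' * pd x' / q x' x ∈ Set.Ioi (0:ℝ) := by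
      intro x' _
      exact div_pos (mul_pos (hp_pos x x') (hpd_pos x')) (hq_pos x' x)
    have h := (strictConcaveOn_log_Ioi.concaveOn).le_map_sum
      (t := Finset.univ) (w := fun x' => q x' x)
      (p := fun x' => p x x' * pd x' / q x' x)
      (fun x' _ => (hq_pos x' x).le) (hq_kernel x) hmem
    simp only [smul_eq_mul] at h
    have hsum : ∑ x' : X, q x' x * (p x x' * pd x' / q x' x)
        = ∑ x' : X, p x x' * pd x' := by
      refine Finset.sum_congr rfl fun x' _ => ?_
      rw [mul_div_assoc']
      exact mul_div_cancel_left₀ _ (hq_pos x' x).ne'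
    rw [hsum, ← hpd_stat x] at h
    exact h
  -- define L and D
  set L : ℕ → ℝ := fun k => ∑ x : X, qIter q q1 k x * Real.log (pd x) with hL
  set D : ℕ → ℝ := fun k => ∑ x : X, ∑ x' : X,
      q x' x * qIter q q1 k x * (Real.log (p x x') - Real.log (q x' x)) with hD
  have step : ∀ k, D k ≤ L k - L (k + 1) := by
    intro k
    have key : ∑ x : X, qIter q q1 k x *
        (∑ x' : X, q x' x * Real.log (p x x' * pd x' / q x' x)) ≤ L k := by
      refine Finset.sum_le_sum fun x _ => ?_
      exact mul_le_mul_of_nonneg_left (jensen x) (hqI_nonneg k x)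
    have expand : ∑ x : X, qIter q q1 k x *
        (∑ x' : X, q x' x * Real.log (p x x' * pd x' / q x' x))
        = L (k + 1) + D k := by
      have hlog : ∀ x x' : X, Real.log (p x x' * pd x' / q x' x)
          = Real.log (pd x') + (Real.log (p x x') - Real.log (q x' x)) := by
        intro x x'
        rw [Real.log_div (mul_ne_zero (hp_pos x x').ne' (hpd_pos x').ne') (hq_pos x' x).ne',
          Real.log_mul (hp_pos x x').ne' (hpd_pos x').ne']
        ring
      have : ∑ x : X, qIter q q1 k x *
          (∑ x' : X, q x' x * Real.log (p x x' * pd x' / q x' x))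
          = ∑ x : X, ∑ x' : X, (q x' x * qIter q q1 k x * Real.log (pd x')
              + q x' x * qIter q q1 k x * (Real.log (p x x') - Real.log (q x' x))) := by
        refine Finset.sum_congr rfl fun x _ => ?_
        rw [Finset.mul_sum]
        refine Finset.sum_congr rfl fun x' _ => ?_
        rw [hlog x x']; ring
      rw [this]
      rw [Finset.sum_congr rfl (fun x _ => Finset.sum_add_distrib), Finset.sum_add_distrib]
      have h1 : ∑ x : X, ∑ x' : X, q x' x * qIter q q1 k x * Real.log (pd x')
          = L (k + 1) := by
        rw [Finset.sum_comm]
        simp only [hL, qIter]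
        refine Finset.sum_congr rfl fun x' _ => ?_
        rw [Finset.sum_mul]
      rw [h1]
    have := expand ▸ key
    simp only [hD]
    linarith
  have telescope : ∑ k ∈ Finset.range n, D k ≤ L 0 - L n := by
    calc ∑ k ∈ Finset.range n, D k ≤ ∑ k ∈ Finset.range n, (L k - L (k + 1)) :=
          Finset.sum_le_sum fun k _ => step k
      _ = L 0 - L n := Finset.sum_range_sub' L n
  -- rewrite the second term of the goal
  have hnne : (n : ℝ) ≠ 0 := by positivity
  have hmain : (n : ℝ) * ∑ x : X, ∑ x' : X,
      q x' x * Qavg q q1 n x * (Real.log (p x x') - Real.log (q x' x))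
      = ∑ k ∈ Finset.range n, D k := by
    rw [Finset.mul_sum]
    have hinner : ∀ x : X, (n : ℝ) * ∑ x' : X,
        q x' x * Qavg q q1 n x * (Real.log (p x x') - Real.log (q x' x))
        = ∑ x' : X, ∑ k ∈ Finset.range n,
            q x' x * qIter q q1 k x * (Real.log (p x x') - Real.log (q x' x)) := by
      intro x
      rw [Finset.mul_sum]
      refine Finset.sum_congr rfl fun x' _ => ?_
      have h2 : q x' x * (∑ k ∈ Finset.range n, qIter q q1 k x)
            * (Real.log (p x x') - Real.log (q x' x))
          = ∑ k ∈ Finset.range n,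
              q x' x * qIter q q1 k x * (Real.log (p x x') - Real.log (q x' x)) := by
        rw [Finset.mul_sum, Finset.sum_mul]
      rw [Qavg, ← h2]
      field_simp
    rw [Finset.sum_congr rfl fun x _ => hinner x]
    rw [Finset.sum_congr rfl (fun x _ => Finset.sum_comm), Finset.sum_comm]
  rw [hmain]
  have hL0 : L 0 = ∑ x : X, q1 x * Real.log (pd x) := rfl
  linarith [telescope]
end

section
/- Let 𝒳 be a nonempty finite set, let p(x|x') be a strictly positive Markov kernel on 𝒳 with a strictly positive stationary distribution p(x), let q(x'|x) be a strictly positive Markov kernel on 𝒳 and let q₁ be a probability distribution on 𝒳. Then for every n ≥ 1, L_B(n) = L − n Σ_x Q_n(x) · KL(q(·|x) ‖ p^r(·|x)), where L = Σ_x q₁(x) log p(x), L_B(n) = Σ_x q_{n+1}(x) log p(x) + n Σ_{x,x'} q(x'|x) Q_n(x) [log p(x|x') − log q(x'|x)], and p^r(x'|x) = p(x|x') p(x') / p(x) is the reverse kernel. -/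
open Finset

/-- the recurrent lower bound equals the likelihood minus `n` times the
`Q_n`-average of the KL divergence from `q(·|x)` to the reverse kernel
`p^r(x'|x) = p(x|x') p(x') / p(x)`. -/
theorem lower_bound_eq_likelihood_sub_kl
    {X : Type} [Fintype X] [Nonempty X]
    (p : X → X → ℝ) (pd : X → ℝ) (q : X → X → ℝ) (q1 : X → ℝ)
    (hp_pos : ∀ x x' : X, 0 < p x x')
    (hp_kernel : ∀ x' : X, ∑ x : X, p x x' = 1)
    (hpd_pos : ∀ x, 0 < pd x)
    (hpd_sum : ∑ x : X, pd x = 1)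
    (hpd_stat : ∀ x, pd x = ∑ x' : X, p x x' * pd x')
    (hq_pos : ∀ x' x : X, 0 < q x' x)
    (hq_kernel : ∀ x : X, ∑ x' : X, q x' x = 1)
    (hq1_nonneg : ∀ x, 0 ≤ q1 x)
    (hq1_sum : ∑ x : X, q1 x = 1)
    (n : ℕ) (hn : 1 ≤ n) :
    ∑ x : X, qIter q q1 n x * Real.log (pd x)
        + (n : ℝ) * ∑ x : X, ∑ x' : X,
            q x' x * Qavg q q1 n x * (Real.log (p x x') - Real.log (q x' x))
      = (∑ x : X, q1 x * Real.log (pd x))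
        - (n : ℝ) * ∑ x : X, Qavg q q1 n x *
            (∑ x' : X, q x' x * Real.log (q x' x / (p x x' * pd x' / pd x))) := by
  have hn0 : (n : ℝ) ≠ 0 := by
    have h : 0 < n := hn
    exact_mod_cast h.ne'
  have hQ : ∀ x, (n : ℝ) * Qavg q q1 n x = ∑ k ∈ Finset.range n, qIter q q1 k x := by
    intro x
    unfold Qavg
    field_simp
  have hlog : ∀ x x' : X, Real.log (q x' x / (p x x' * pd x' / pd x))
      = Real.log (q x' x) - (Real.log (p x x') + Real.log (pd x') - Real.log (pd x)) := by
    intro x x'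
    rw [Real.log_div (hq_pos x' x).ne'
          (div_pos (mul_pos (hp_pos x x') (hpd_pos x')) (hpd_pos x)).ne',
        Real.log_div (mul_pos (hp_pos x x') (hpd_pos x')).ne' (hpd_pos x).ne',
        Real.log_mul (hp_pos x x').ne' (hpd_pos x').ne']
  simp only [hlog]
  have step : ∀ k, ∑ x : X, qIter q q1 k x *
        (∑ x' : X, q x' x * (Real.log (pd x') - Real.log (pd x)))
      = (∑ x : X, qIter q q1 (k+1) x * Real.log (pd x))
        - ∑ x : X, qIter q q1 k x * Real.log (pd x) := by
    intro k
    have lhs_eq : ∑ x : X, qIter q q1 k x *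
          (∑ x' : X, q x' x * (Real.log (pd x') - Real.log (pd x)))
        = (∑ x : X, ∑ x' : X, q x' x * qIter q q1 k x * Real.log (pd x'))
          - ∑ x : X, ∑ x' : X, q x' x * (qIter q q1 k x * Real.log (pd x)) := by
      rw [← Finset.sum_sub_distrib]
      refine Finset.sum_congr rfl fun x _ => ?_
      rw [Finset.mul_sum, ← Finset.sum_sub_distrib]
      refine Finset.sum_congr rfl fun x' _ => ?_
      ring
    rw [lhs_eq]
    congr 1
    · rw [Finset.sum_comm]
      refine Finset.sum_congr rfl fun y _ => ?_
      show (∑ x : X, q y x * qIter q q1 k x * Real.log (pd y))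
          = qIter q q1 (k+1) y * Real.log (pd y)
      rw [qIter, Finset.sum_mul]
    · refine Finset.sum_congr rfl fun x _ => ?_
      rw [← Finset.sum_mul, hq_kernel, one_mul]
  have tele : ∑ k ∈ Finset.range n,
        ((∑ x : X, qIter q q1 (k+1) x * Real.log (pd x))
          - ∑ x : X, qIter q q1 k x * Real.log (pd x))
      = (∑ x : X, qIter q q1 n x * Real.log (pd x))
        - ∑ x : X, q1 x * Real.log (pd x) :=
    Finset.sum_range_sub (fun k => ∑ x : X, qIter q q1 k x * Real.log (pd x)) n
  have key : (n : ℝ) * ∑ x : X, Qavg q q1 n x *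
        (∑ x' : X, q x' x * (Real.log (pd x') - Real.log (pd x)))
      = (∑ x : X, qIter q q1 n x * Real.log (pd x))
        - ∑ x : X, q1 x * Real.log (pd x) := by
    rw [Finset.mul_sum]
    have hxe : ∀ x : X, (n : ℝ) * (Qavg q q1 n x *
          (∑ x' : X, q x' x * (Real.log (pd x') - Real.log (pd x))))
        = ∑ k ∈ Finset.range n, qIter q q1 k x *
          (∑ x' : X, q x' x * (Real.log (pd x') - Real.log (pd x))) := by
      intro x
      rw [← mul_assoc, hQ, Finset.sum_mul]
    simp only [hxe]
    rw [Finset.sum_comm, ← tele]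
    exact Finset.sum_congr rfl fun k _ => step k
  have lhs2 : ∀ x : X, ∑ x' : X, q x' x * Qavg q q1 n x *
        (Real.log (p x x') - Real.log (q x' x))
      = Qavg q q1 n x * ∑ x' : X, q x' x * (Real.log (p x x') - Real.log (q x' x)) := by
    intro x
    rw [Finset.mul_sum]
    exact Finset.sum_congr rfl fun x' _ => by ring
  have rhs2 : ∀ x : X, ∑ x' : X, q x' x *
        (Real.log (q x' x) - (Real.log (p x x') + Real.log (pd x') - Real.log (pd x)))
      = (- ∑ x' : X, q x' x * (Real.log (p x x') - Real.log (q x' x)))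
        - ∑ x' : X, q x' x * (Real.log (pd x') - Real.log (pd x)) := by
    intro x
    rw [← Finset.sum_neg_distrib, ← Finset.sum_sub_distrib]
    exact Finset.sum_congr rfl fun x' _ => by ring
  simp only [lhs2, rhs2]
  have e3 : ∑ x : X, Qavg q q1 n x *
        ((- ∑ x' : X, q x' x * (Real.log (p x x') - Real.log (q x' x)))
          - ∑ x' : X, q x' x * (Real.log (pd x') - Real.log (pd x)))
      = (- ∑ x : X, Qavg q q1 n x *
            (∑ x' : X, q x' x * (Real.log (p x x') - Real.log (q x' x))))
        - ∑ x : X, Qavg q q1 n x *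
            (∑ x' : X, q x' x * (Real.log (pd x') - Real.log (pd x))) := by
    rw [← Finset.sum_neg_distrib, ← Finset.sum_sub_distrib]
    exact Finset.sum_congr rfl fun x _ => by ring
  rw [e3]
  linear_combination -key
end

section
/- Let 𝒳 be a nonempty finite set, let p(x|x') be a strictly positive Markov kernel on 𝒳 with a strictly positive stationary distribution p(x), let q(x'|x) be a strictly positive Markov kernel on 𝒳 and let q₁ be a probability distribution on 𝒳. Then for every n ≥ 1 the lower bound is tight, i.e. L_B(n) = L, if and only if q(x'|x) = p^r(x'|x) for all x' and all x with Q_n(x) > 0, where L = Σ_x q₁(x) log p(x), L_B(n) = Σ_x q_{n+1}(x) log p(x) + n Σ_{x,x'} q(x'|x) Q_n(x) [log p(x|x') − log q(x'|x)], and p^r(x'|x) = p(x|x') p(x') / p(x). -/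
/-!
Write `T(x) = n Q_n(x) = ∑_{k<n} q_{k+1}(x)`. Splitting `log p^r(x'|x)` into
`log p(x|x') + log p(x') - log p(x)` and summing the last two terms against `T(x) q(x'|x)`
telescopes along the chain `q_1, q_2, …` to `∑_x (q_{n+1}(x) - q_1(x)) log p(x)`, so
`L_B(n) - L = ∑_x T(x) ∑_{x'} q(x'|x) log (p^r(x'|x) / q(x'|x))`.
Stationarity makes `p^r(·|x)` a probability distribution, so by Gibbs' inequality every inner
sum is `≤ 0`, with equality iff `q(·|x) = p^r(·|x)`. As `T ≥ 0`, the total vanishes iff every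
inner sum with `T(x) > 0` does.
-/

open Finset

open Real

section Gibbs

variable {ι : Type*} [Fintype ι]

theorem mul_log_sub_log_le_sub {a b : ℝ} (ha : 0 < a) (hb : 0 < b) :
    a * (log b - log a) ≤ b - a :=
  calc a * (log b - log a) = a * log (b / a) := by rw [log_div hb.ne' ha.ne']
    _ ≤ a * (b / a - 1) := by gcongr; exact log_le_sub_one_of_pos (div_pos hb ha)
    _ = b - a := by field_simp

theorem mul_log_sub_log_lt_sub {a b : ℝ} (ha : 0 < a) (hb : 0 < b) (hab : a ≠ b) :
    a * (log b - log a) < b - a :=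
  calc a * (log b - log a) = a * log (b / a) := by rw [log_div hb.ne' ha.ne']
    _ < a * (b / a - 1) := by
        gcongr
        refine log_lt_sub_one_of_pos (div_pos hb ha) ?_
        rwa [ne_eq, div_eq_one_iff_eq ha.ne', eq_comm]
    _ = b - a := by field_simp

theorem sum_mul_log_sub_log_le_sub {f g : ι → ℝ} (hf : ∀ i, 0 < f i) (hg : ∀ i, 0 < g i) :
    ∑ i, f i * (log (g i) - log (f i)) ≤ ∑ i, g i - ∑ i, f i := by
  rw [← sum_sub_distrib]
  exact sum_le_sum fun i _ => mul_log_sub_log_le_sub (hf i) (hg i)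

theorem sum_mul_log_sub_log_nonpos {f g : ι → ℝ} (hf : ∀ i, 0 < f i) (hg : ∀ i, 0 < g i)
    (hgf : ∑ i, g i ≤ ∑ i, f i) : ∑ i, f i * (log (g i) - log (f i)) ≤ 0 := by
  linarith [sum_mul_log_sub_log_le_sub hf hg]

theorem sum_mul_log_sub_log_eq_zero_iff {f g : ι → ℝ} (hf : ∀ i, 0 < f i) (hg : ∀ i, 0 < g i)
    (hgf : ∑ i, g i ≤ ∑ i, f i) : ∑ i, f i * (log (g i) - log (f i)) = 0 ↔ ∀ i, f i = g i := by
  refine ⟨fun h0 => ?_, fun hfg => sum_eq_zero fun i _ => by rw [hfg i, sub_self, mul_zero]⟩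
  by_contra! ⟨i, hi⟩
  have : ∑ i, f i * (log (g i) - log (f i)) < ∑ i, (g i - f i) :=
    sum_lt_sum (fun j _ => mul_log_sub_log_le_sub (hf j) (hg j))
      ⟨i, mem_univ i, mul_log_sub_log_lt_sub (hf i) (hg i) hi⟩
  rw [sum_sub_distrib] at this
  linarith

end Gibbs

section Chain

variable {X : Type} [Fintype X] {q : X → X → ℝ} {q1 : X → ℝ}

theorem qIter_nonneg (hq : ∀ x x', 0 ≤ q x x') (hq1 : ∀ x, 0 ≤ q1 x) :
    ∀ k x, 0 ≤ qIter q q1 k x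
  | 0, x => hq1 x
  | k + 1, x => sum_nonneg fun x' _ => mul_nonneg (hq x x') (qIter_nonneg hq hq1 k x')

theorem natCast_mul_Qavg (n : ℕ) (x : X) :
    (n : ℝ) * Qavg q q1 n x = ∑ k ∈ range n, qIter q q1 k x := by
  rcases eq_or_ne n 0 with rfl | hn
  · simp
  · rw [Qavg, ← mul_assoc, mul_one_div_cancel (Nat.cast_ne_zero.mpr hn), one_mul]

theorem Qavg_pos_iff {n : ℕ} {x : X} :
    0 < Qavg q q1 n x ↔ 0 < ∑ k ∈ range n, qIter q q1 k x := by
  rcases eq_or_ne n 0 with rfl | hn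
  · simp [Qavg]
  · rw [Qavg, mul_pos_iff_of_pos_left (by positivity)]

theorem sum_kernel_mul_sum_qIter_sub (n : ℕ) (x' : X) :
    ∑ x, q x' x * ∑ k ∈ range n, qIter q q1 k x - ∑ k ∈ range n, qIter q q1 k x'
      = qIter q q1 n x' - q1 x' := by
  have hstep : ∑ x, q x' x * ∑ k ∈ range n, qIter q q1 k x
      = ∑ k ∈ range n, qIter q q1 (k + 1) x' := by
    simp only [qIter, mul_sum]
    exact sum_comm
  rw [hstep, ← sum_sub_distrib, sum_range_sub (fun k => qIter q q1 k x')]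
  rfl

theorem sum_mul_sum_kernel_mul_sub (hq : ∀ x, ∑ x', q x' x = 1) (w φ : X → ℝ) :
    ∑ x, w x * ∑ x', q x' x * (φ x' - φ x) = ∑ x', (∑ x, q x' x * w x - w x') * φ x' := by
  have hmove : ∑ x, w x * ∑ x', q x' x * φ x' = ∑ x', (∑ x, q x' x * w x) * φ x' := by
    simp only [mul_sum, sum_mul]
    rw [sum_comm]
    exact sum_congr rfl fun _ _ => sum_congr rfl fun _ _ => by ring
  simp only [mul_sub, sum_sub_distrib, ← sum_mul, hq, sub_mul, one_mul, hmove]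

end Chain

section LowerBound

variable {X : Type}

/-- `reverseKernel p pd x' x` is `p^r(x'|x)`, the time reversal of `p` with respect to `pd`. -/
noncomputable def reverseKernel (p : X → X → ℝ) (pd : X → ℝ) (x' x : X) : ℝ :=
  p x x' * pd x' / pd x

theorem reverseKernel_pos {p : X → X → ℝ} {pd : X → ℝ} (hp_pos : ∀ x x', 0 < p x x')
    (hpd_pos : ∀ x, 0 < pd x) (x' x : X) : 0 < reverseKernel p pd x' x :=
  div_pos (mul_pos (hp_pos x x') (hpd_pos x')) (hpd_pos x)

theorem sum_reverseKernel [Fintype X] {p : X → X → ℝ} {pd : X → ℝ} (hpd_pos : ∀ x, 0 < pd x)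
    (hpd_stat : ∀ x, pd x = ∑ x', p x x' * pd x') (x : X) :
    ∑ x', reverseKernel p pd x' x = 1 := by
  simp only [reverseKernel]
  rw [← sum_div, ← hpd_stat x, div_self (hpd_pos x).ne']

theorem log_reverseKernel {p : X → X → ℝ} {pd : X → ℝ} (hp_pos : ∀ x x', 0 < p x x')
    (hpd_pos : ∀ x, 0 < pd x) (x' x : X) :
    log (reverseKernel p pd x' x) = log (p x x') + (log (pd x') - log (pd x)) := by
  rw [reverseKernel, log_div (mul_pos (hp_pos x x') (hpd_pos x')).ne' (hpd_pos x).ne',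
    log_mul (hp_pos x x').ne' (hpd_pos x').ne']
  ring

noncomputable def lowerBound [Fintype X] (p : X → X → ℝ) (pd : X → ℝ) (q : X → X → ℝ)
    (q1 : X → ℝ) (n : ℕ) : ℝ :=
  ∑ x, qIter q q1 n x * log (pd x)
    + n * ∑ x, ∑ x', q x' x * Qavg q q1 n x * (log (p x x') - log (q x' x))

theorem lowerBound_sub_eq_sum [Fintype X] {p : X → X → ℝ} {pd : X → ℝ} {q : X → X → ℝ}
    (q1 : X → ℝ) (hp_pos : ∀ x x', 0 < p x x') (hpd_pos : ∀ x, 0 < pd x)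
    (hq_kernel : ∀ x, ∑ x', q x' x = 1) (n : ℕ) :
    lowerBound p pd q q1 n - ∑ x, q1 x * log (pd x)
      = ∑ x, (∑ k ∈ range n, qIter q q1 k x)
          * ∑ x', q x' x * (log (reverseKernel p pd x' x) - log (q x' x)) := by
  set T : X → ℝ := fun x => ∑ k ∈ range n, qIter q q1 k x
  have hsplit : ∀ x, T x * ∑ x', q x' x * (log (reverseKernel p pd x' x) - log (q x' x))
      = n * ∑ x', q x' x * Qavg q q1 n x * (log (p x x') - log (q x' x))
        + T x * ∑ x', q x' x * (log (pd x') - log (pd x)) := by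
    intro x
    simp only [log_reverseKernel hp_pos hpd_pos, T, ← natCast_mul_Qavg, mul_sum,
      ← sum_add_distrib]
    exact sum_congr rfl fun _ _ => by ring
  have hchain : ∑ x, T x * ∑ x', q x' x * (log (pd x') - log (pd x))
      = ∑ x, (qIter q q1 n x - q1 x) * log (pd x) := by
    rw [sum_mul_sum_kernel_mul_sub hq_kernel]
    exact sum_congr rfl fun x _ => by rw [sum_kernel_mul_sum_qIter_sub]
  rw [sum_congr rfl fun x _ => hsplit x, sum_add_distrib, ← mul_sum, hchain, lowerBound]
  simp only [sub_mul, sum_sub_distrib]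
  ring

end LowerBound

theorem lower_bound_tight_iff_reverse_kernel_general
    {X : Type} [Fintype X]
    (p : X → X → ℝ) (pd : X → ℝ) (q : X → X → ℝ) (q1 : X → ℝ)
    (hp_pos : ∀ x x' : X, 0 < p x x')
    (hpd_pos : ∀ x, 0 < pd x)
    (hpd_stat : ∀ x, pd x = ∑ x' : X, p x x' * pd x')
    (hq_pos : ∀ x' x : X, 0 < q x' x)
    (hq_kernel : ∀ x : X, ∑ x' : X, q x' x = 1)
    (hq1_nonneg : ∀ x, 0 ≤ q1 x)
    (n : ℕ) :
    (∑ x : X, qIter q q1 n x * Real.log (pd x)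
        + (n : ℝ) * ∑ x : X, ∑ x' : X,
            q x' x * Qavg q q1 n x * (Real.log (p x x') - Real.log (q x' x))
      = ∑ x : X, q1 x * Real.log (pd x))
    ↔ (∀ x : X, 0 < Qavg q q1 n x → ∀ x' : X, q x' x = p x x' * pd x' / pd x) := by
  have hT_nonneg x : 0 ≤ ∑ k ∈ range n, qIter q q1 k x :=
    sum_nonneg fun k _ => qIter_nonneg (fun a b => (hq_pos a b).le) hq1_nonneg k x
  have hsum_le x : ∑ x', reverseKernel p pd x' x ≤ ∑ x', q x' x := by
    rw [sum_reverseKernel hpd_pos hpd_stat, hq_kernel]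
  have hr_pos x x' := reverseKernel_pos hp_pos hpd_pos x' x
  have hterm_nonpos x : (∑ k ∈ range n, qIter q q1 k x)
      * ∑ x', q x' x * (log (reverseKernel p pd x' x) - log (q x' x)) ≤ 0 :=
    mul_nonpos_of_nonneg_of_nonpos (hT_nonneg x)
      (sum_mul_log_sub_log_nonpos (hq_pos · x) (hr_pos x) (hsum_le x))
  change lowerBound p pd q q1 n = _ ↔ _
  rw [← sub_eq_zero, lowerBound_sub_eq_sum q1 hp_pos hpd_pos hq_kernel,
    sum_eq_zero_iff_of_nonpos fun x _ => hterm_nonpos x]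
  refine forall_congr' fun x => ?_
  rw [mul_eq_zero, or_iff_not_imp_left, Qavg_pos_iff, (hT_nonneg x).lt_iff_ne',
    sum_mul_log_sub_log_eq_zero_iff (hq_pos · x) (hr_pos x) (hsum_le x)]
  simp only [mem_univ, true_implies, reverseKernel]

/-- the lower bound `L_B(n)` is tight, i.e. equals the likelihood `L`,
iff `q(x'|x)` coincides with the reverse kernel `p^r(x'|x) = p(x|x') p(x') / p(x)`
for all `x'` and all `x` with `Q_n(x) > 0`. -/
theorem lower_bound_tight_iff_reverse_kernel
    {X : Type} [Fintype X] [Nonempty X]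
    (p : X → X → ℝ) (pd : X → ℝ) (q : X → X → ℝ) (q1 : X → ℝ)
    (hp_pos : ∀ x x' : X, 0 < p x x')
    (hp_kernel : ∀ x' : X, ∑ x : X, p x x' = 1)
    (hpd_pos : ∀ x, 0 < pd x)
    (hpd_sum : ∑ x : X, pd x = 1)
    (hpd_stat : ∀ x, pd x = ∑ x' : X, p x x' * pd x')
    (hq_pos : ∀ x' x : X, 0 < q x' x)
    (hq_kernel : ∀ x : X, ∑ x' : X, q x' x = 1)
    (hq1_nonneg : ∀ x, 0 ≤ q1 x)
    (hq1_sum : ∑ x : X, q1 x = 1)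
    (n : ℕ) (hn : 1 ≤ n) :
    (∑ x : X, qIter q q1 n x * Real.log (pd x)
        + (n : ℝ) * ∑ x : X, ∑ x' : X,
            q x' x * Qavg q q1 n x * (Real.log (p x x') - Real.log (q x' x))
      = ∑ x : X, q1 x * Real.log (pd x))
    ↔ (∀ x : X, 0 < Qavg q q1 n x → ∀ x' : X, q x' x = p x x' * pd x' / pd x) :=
  lower_bound_tight_iff_reverse_kernel_general p pd q q1 hp_pos hpd_pos hpd_stat hq_pos hq_kernel
    hq1_nonneg n
end

section
/- Let 𝒳 be a nonempty finite set, Θ ⊆ ℝ^d open, and for each x ∈ 𝒳 let θ ↦ p_θ(x) be a strictly positive function differentiable on Θ with Σ_{x∈𝒳} p_θ(x) = 1 for every θ ∈ Θ. Fix θ̄ ∈ Θ, let q(x'|x) be a Markov kernel on 𝒳 and q₁ a probability distribution on 𝒳, and define q_k(x) = Σ_{x'} q(x|x') q_{k−1}(x'). Assume the iterates converge geometrically to p_{θ̄}: there are C̃ > 0 and α ∈ (0,1) with Σ_{x∈𝒳} |q_n(x) − p_{θ̄}(x)| ≤ C̃ α^n for all n ≥ 1. Then ‖ ∇_θ Σ_{x∈𝒳}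 q_n(x) log p_θ(x) |_{θ=θ̄} ‖₁ ≤ C α^n for all n ≥ 1, where C = C̃ · max_{x∈𝒳} ‖ ∇_θ log p_θ(x) |_{θ=θ̄} ‖₁; in particular the gradient of the first term of the lower bound vanishes asymptotically as n → ∞. -/
open Finset Filter Topology

section Score

variable {E : Type*} [NormedAddCommGroup E] [NormedSpace ℝ E] {X : Type*} [Fintype X]
  {p : E → X → ℝ} {a : E}

theorem sum_fderiv_eq_zero_of_sum_eventuallyEq_const (hp : ∀ x, DifferentiableAt ℝ (p · x) a)
    {c : ℝ} (hsum : (fun θ => ∑ x, p θ x) =ᶠ[𝓝 a] fun _ => c) :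
    ∑ x, fderiv ℝ (p · x) a = 0 := by
  rw [← fderiv_fun_sum fun x _ => hp x, hsum.fderiv_eq]
  exact fderiv_const_apply c

theorem sum_smul_fderiv_log_eq_zero (hp : ∀ x, DifferentiableAt ℝ (p · x) a)
    (hpa : ∀ x, p a x ≠ 0) {c : ℝ} (hsum : (fun θ => ∑ x, p θ x) =ᶠ[𝓝 a] fun _ => c) :
    ∑ x, p a x • fderiv ℝ (fun θ => Real.log (p θ x)) a = 0 := by
  have hscore : ∀ x, p a x • fderiv ℝ (fun θ => Real.log (p θ x)) a = fderiv ℝ (p · x) a := by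
    intro x
    rw [fderiv.log (hp x) (hpa x), smul_smul, mul_inv_cancel₀ (hpa x), one_smul]
  simp only [hscore]
  exact sum_fderiv_eq_zero_of_sum_eventuallyEq_const hp hsum

theorem fderiv_sum_mul_log_eq_sum_sub_smul (hp : ∀ x, DifferentiableAt ℝ (p · x) a)
    (hpa : ∀ x, p a x ≠ 0) {c : ℝ} (hsum : (fun θ => ∑ x, p θ x) =ᶠ[𝓝 a] fun _ => c)
    (w : X → ℝ) :
    fderiv ℝ (fun θ => ∑ x, w x * Real.log (p θ x)) a
      = ∑ x, (w x - p a x) • fderiv ℝ (fun θ => Real.log (p θ x)) a := by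
  have hlog : ∀ x, DifferentiableAt ℝ (fun θ => Real.log (p θ x)) a :=
    fun x => (hp x).log (hpa x)
  rw [fderiv_fun_sum fun x _ => (hlog x).const_mul (w x)]
  simp only [sub_smul, Finset.sum_sub_distrib, sum_smul_fderiv_log_eq_zero hp hpa hsum,
    sub_zero, fderiv_const_mul (hlog _)]

end Score

theorem sum_abs_sum_smul_apply_le {E : Type*} [AddCommGroup E] [Module ℝ E]
    [TopologicalSpace E] {X ι : Type*} [Fintype X] [Nonempty X] [Fintype ι]
    (w : X → ℝ) (g : X → E →L[ℝ] ℝ) (v : ι → E) :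
    ∑ i, |(∑ x, w x • g x) (v i)|
      ≤ (∑ x, |w x|) * univ.sup' univ_nonempty (fun x => ∑ i, |g x (v i)|) := by
  set M := univ.sup' univ_nonempty (fun x => ∑ i, |g x (v i)|)
  calc ∑ i, |(∑ x, w x • g x) (v i)|
      ≤ ∑ i, ∑ x, |w x| * |g x (v i)| := by
        gcongr with i
        simpa only [_root_.sum_apply, smul_apply, smul_eq_mul,
          abs_mul] using abs_sum_le_sum_abs (fun x => w x * g x (v i)) univ
    _ = ∑ x, |w x| * ∑ i, |g x (v i)| := by
        rw [Finset.sum_comm]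
        simp only [Finset.mul_sum]
    _ ≤ ∑ x, |w x| * M := by
        gcongr with x
        exact le_sup' (fun x => ∑ i, |g x (v i)|) (mem_univ x)
    _ = (∑ x, |w x|) * M := (Finset.sum_mul ..).symm

theorem grad_first_term_vanishes_geometrically_general
    {X : Type} [Fintype X] [Nonempty X] {d : ℕ}
    (Θ : Set (Fin d → ℝ)) (hΘ : IsOpen Θ)
    (p : (Fin d → ℝ) → X → ℝ)
    (hpos : ∀ θ ∈ Θ, ∀ x : X, 0 < p θ x)
    (hdiff : ∀ x : X, ∀ θ ∈ Θ, DifferentiableAt ℝ (fun θ' => p θ' x) θ)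
    (hsum : ∀ θ ∈ Θ, ∑ x : X, p θ x = 1)
    (θb : Fin d → ℝ) (hθb : θb ∈ Θ)
    (q : X → X → ℝ) (q1 : X → ℝ)
    (Ct : ℝ) (α : ℝ)
    (hgeo : ∀ k : ℕ, ∑ x : X, |qIter q q1 k x - p θb x| ≤ Ct * α ^ (k + 1)) :
    ∀ k : ℕ,
      ∑ i : Fin d,
          |(fderiv ℝ (fun θ => ∑ x : X, qIter q q1 k x * Real.log (p θ x)) θb)
            (Pi.single i 1)|
        ≤ (Ct * Finset.univ.sup' Finset.univ_nonempty
              (fun x : X => ∑ i : Fin d,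
                |(fderiv ℝ (fun θ => Real.log (p θ x)) θb) (Pi.single i 1)|))
            * α ^ (k + 1) := by
  intro k
  have hsum_near : (fun θ => ∑ x, p θ x) =ᶠ[𝓝 θb] fun _ => 1 :=
    eventually_of_mem (hΘ.mem_nhds hθb) hsum
  have hM : 0 ≤ univ.sup' univ_nonempty (fun x : X => ∑ i : Fin d,
      |(fderiv ℝ (fun θ => Real.log (p θ x)) θb) (Pi.single i 1)|) :=
    le_sup'_of_le _ (mem_univ (Classical.arbitrary X)) (sum_nonneg fun _ _ => abs_nonneg _)
  rw [fderiv_sum_mul_log_eq_sum_sub_smul (fun x => hdiff x θb hθb)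
    (fun x => (hpos θb hθb x).ne') hsum_near]
  calc _ ≤ _ := sum_abs_sum_smul_apply_le _ _ _
    _ ≤ _ := mul_le_mul_of_nonneg_right (hgeo k) hM
    _ = _ := by ring

/-- if the kernel iterates `q_n` (here `qIter q q1 (n-1)`, so the bounds are
indexed by `α^(k+1)` with `q_{k+1} = qIter q q1 k`) converge geometrically to `p θb` in
total variation, `∑_x |q_n(x) − p_θb(x)| ≤ C̃ α^n`, then the ℓ¹ norm of the gradient of
`θ ↦ ∑_x q_n(x) log p_θ(x)` at `θb` is bounded by `C α^n`, where
`C = C̃ · max_x ‖∇_θ log p_θ(x)|_{θb}‖₁`; in particular it vanishes as `n → ∞`.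
Gradients are represented componentwise via the Fréchet derivative applied to the
standard basis vectors `Pi.single i 1`, and `‖v‖₁ = ∑ i |v i|`. -/
theorem grad_first_term_vanishes_geometrically
    {X : Type} [Fintype X] [Nonempty X] {d : ℕ}
    (Θ : Set (Fin d → ℝ)) (hΘ : IsOpen Θ)
    (p : (Fin d → ℝ) → X → ℝ)
    (hpos : ∀ θ ∈ Θ, ∀ x : X, 0 < p θ x)
    (hdiff : ∀ x : X, ∀ θ ∈ Θ, DifferentiableAt ℝ (fun θ' => p θ' x) θ)
    (hsum : ∀ θ ∈ Θ, ∑ x : X, p θ x = 1)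
    (θb : Fin d → ℝ) (hθb : θb ∈ Θ)
    (q : X → X → ℝ) (q1 : X → ℝ)
    (hq_nonneg : ∀ x' x : X, 0 ≤ q x' x)
    (hq_kernel : ∀ x : X, ∑ x' : X, q x' x = 1)
    (hq1_nonneg : ∀ x, 0 ≤ q1 x) (hq1_sum : ∑ x : X, q1 x = 1)
    (Ct : ℝ) (hCt : 0 < Ct) (α : ℝ) (hα0 : 0 < α) (hα1 : α < 1)
    (hgeo : ∀ k : ℕ, ∑ x : X, |qIter q q1 k x - p θb x| ≤ Ct * α ^ (k + 1)) :
    ∀ k : ℕ,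
      ∑ i : Fin d,
          |(fderiv ℝ (fun θ => ∑ x : X, qIter q q1 k x * Real.log (p θ x)) θb)
            (Pi.single i 1)|
        ≤ (Ct * Finset.univ.sup' Finset.univ_nonempty
              (fun x : X => ∑ i : Fin d,
                |(fderiv ℝ (fun θ => Real.log (p θ x)) θb) (Pi.single i 1)|))
            * α ^ (k + 1) :=
  grad_first_term_vanishes_geometrically_general Θ hΘ p hpos hdiff hsum θb hθb q q1 Ct α hgeo
end

section
/- Let 𝒳 = ∏_{i=1}^m 𝒳_i be a finite product space. For each i let p_i(x_i|x_{−i}) be a strictly positive conditional distribution (Σ_{x_i} p_i(x_i|x_{−i}) = 1 for every x_{−i}), let α_1,…,α_m > 0 with Σ_i α_i = 1, and define the Gibbs-type kernel P(x|x') = Σ_{i=1}^m α_i · p_i(x_i|x'_{−i}) · [x_{−i} = x'_{−i}]. Suppose p is a strictly positive stationary distribution of P and that P satisfies detailed balance with respect to p: p(x') P(x|x') = p(x) P(x'|x) for all x, x'. Then for every i and every x, p_i(x_i|x_{−i}) = p(x_i|x_{−i}) := p(x)/Σ_{x_i'} p(x_i', x_{−i}); in particular the collection {p_i} is consistent, with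 joint distribution p. -/
open Finset

/-- The Gibbs-type kernel `P(x|x') = ∑_i α_i · p_i(x_i | x'_{−i}) · [x_{−i} = x'_{−i}]`,
where `cond i y = p_i(y_i | y_{−i})` is the `i`-th conditional evaluated at the full
configuration `y`, so that `cond i (Function.update x' i (x i)) = p_i(x_i | x'_{−i})`. -/
noncomputable def gibbsKernel {ι : Type} [Fintype ι] [DecidableEq ι]
    {Xs : ι → Type} [∀ i, Fintype (Xs i)] [∀ i, DecidableEq (Xs i)]
    (α : ι → ℝ) (cond : (i : ι) → (∀ j, Xs j) → ℝ) (x x' : ∀ i, Xs i) : ℝ :=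
  ∑ i : ι, α i * cond i (Function.update x' i (x i)) *
    (if ∀ j, j ≠ i → x j = x' j then (1 : ℝ) else 0)

/-- if the Gibbs-type kernel built from strictly positive conditionals
`p_i(x_i|x_{−i})` has a strictly positive stationary distribution `p` and satisfies
detailed balance with respect to `p`, then each modelled conditional coincides with the
corresponding conditional of `p`: `p_i(x_i|x_{−i}) = p(x)/∑_{x_i'} p(x_i', x_{−i})`;
in particular the collection of conditionals is consistent with joint `p`. -/
theorem detailed_balance_implies_consistency
    {ι : Type} [Fintype ι] [DecidableEq ι]
    {Xs : ι → Type} [∀ i, Fintype (Xs i)] [∀ i, DecidableEq (Xs i)]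
    (pcond : (i : ι) → (∀ j, Xs j) → ℝ)
    (hpcond_pos : ∀ i (x : ∀ j, Xs j), 0 < pcond i x)
    (hpcond_sum : ∀ i (x : ∀ j, Xs j), ∑ a : Xs i, pcond i (Function.update x i a) = 1)
    (α : ι → ℝ) (hα : ∀ i, 0 < α i) (hαsum : ∑ i : ι, α i = 1)
    (p : (∀ i, Xs i) → ℝ)
    (hp_pos : ∀ x, 0 < p x) (hp_sum : ∑ x : ∀ i, Xs i, p x = 1)
    (hp_stat : ∀ x : ∀ i, Xs i, p x = ∑ x' : ∀ i, Xs i, gibbsKernel α pcond x x' * p x')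
    (hdb : ∀ x x' : ∀ i, Xs i,
      p x' * gibbsKernel α pcond x x' = p x * gibbsKernel α pcond x' x) :
    ∀ i (x : ∀ j, Xs j), pcond i x = p x / ∑ a : Xs i, p (Function.update x i a) := by
  intro i x
  have key : ∀ a : Xs i, p (Function.update x i a) * pcond i x
      = p x * pcond i (Function.update x i a) := by
    intro a
    by_cases ha : a = x i
    · subst ha
      simp
    · have hdb' := hdb x (Function.update x i a)
      have h1 : gibbsKernel α pcond x (Function.update x i a) = α i * pcond i x := by
        unfold gibbsKernel
        rw [Finset.sum_eq_single i]
        · have hupd : Function.update (Function.update x i a) i (x i) = x := by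
            ext k
            by_cases hk : k = i
            · subst hk; simp
            · simp [Function.update_of_ne hk]
          rw [hupd]
          have hind : (∀ j, j ≠ i → x j = Function.update x i a j) := by
            intro j hj; simp [Function.update_of_ne hj]
          rw [if_pos hind, mul_one]
        · intro j _ hj
          have hind : ¬ (∀ k, k ≠ j → x k = Function.update x i a k) := by
            intro h
            have := h i (Ne.symm hj)
            rw [Function.update_self] at this
            exact ha this.symm
          rw [if_neg hind, mul_zero]
        · simp
      have h2 : gibbsKernel α pcond (Function.update x i a) x
          = α i * pcond i (Function.update x i a) := by
        unfold gibbsKernel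
        rw [Finset.sum_eq_single i]
        · have hupd : Function.update x i (Function.update x i a i)
              = Function.update x i a := by
            rw [Function.update_self]
          rw [hupd]
          have hind : (∀ j, j ≠ i → Function.update x i a j = x j) := by
            intro j hj; simp [Function.update_of_ne hj]
          rw [if_pos hind, mul_one]
        · intro j _ hj
          have hind : ¬ (∀ k, k ≠ j → Function.update x i a k = x k) := by
            intro h
            have := h i (Ne.symm hj)
            rw [Function.update_self] at this
            exact ha this
          rw [if_neg hind, mul_zero]
        · simp
      rw [h1, h2] at hdb'
      have h3 : α i * (p (Function.update x i a) * pcond i x)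
          = α i * (p x * pcond i (Function.update x i a)) := by
        linear_combination hdb'
      exact mul_left_cancel₀ (hα i).ne' h3
  have hsum : (∑ a : Xs i, p (Function.update x i a)) * pcond i x = p x := by
    rw [Finset.sum_mul]
    calc ∑ a : Xs i, p (Function.update x i a) * pcond i x
        = ∑ a : Xs i, p x * pcond i (Function.update x i a) :=
          Finset.sum_congr rfl fun a _ => key a
      _ = p x * ∑ a : Xs i, pcond i (Function.update x i a) := by
          rw [Finset.mul_sum]
      _ = p x := by rw [hpcond_sum i x, mul_one]
  have : Nonempty (Xs i) := ⟨x i⟩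
  have hS : 0 < ∑ a : Xs i, p (Function.update x i a) :=
    Finset.sum_pos (fun a _ => hp_pos _) (Finset.univ_nonempty (α := Xs i))
  rw [eq_div_iff hS.ne']
  linarith [hsum]
end

section
/- Fix n ≥ 1, a real n×n matrix W and b ∈ ℝ^n, and consider the Markov kernel on the hypercube 𝒵 = {−1,+1}^n given by p(z|z') = exp(⟨Wz' + b, z⟩) / Σ_{u∈𝒵} exp(⟨Wz' + b, u⟩). Then there exists a strictly positive probability distribution π on 𝒵 such that p satisfies detailed balance with respect to π (i.e. π(z') p(z|z') = π(z) p(z'|z) for all z, z') if and only if W is symmetric, W = Wᵀ. Moreover, when W = Wᵀ, one such π is π(z) ∝ Z(z) · exp(⟨b, z⟩) with Z(z) = Σ_{u∈𝒵} exp(⟨Wz + b, u⟩). -/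
open Finset

/-- The ±1 vector in `ℝ^n` encoded by a Boolean vector `z ∈ {−1,+1}^n`. -/
noncomputable def pmVec {n : ℕ} (z : Fin n → Bool) : Fin n → ℝ :=
  fun i => if z i then 1 else -1

/-- The score `⟨W z' + b, z⟩` of a transition `z' → z` on the hypercube. -/
noncomputable def isingScore {n : ℕ} (W : Matrix (Fin n) (Fin n) ℝ) (b : Fin n → ℝ)
    (z' z : Fin n → Bool) : ℝ :=
  ∑ i : Fin n, ((∑ j : Fin n, W i j * pmVec z' j) + b i) * pmVec z i

/-- The Markov kernel `p(z|z') = exp⟨W z' + b, z⟩ / ∑_u exp⟨W z' + b, u⟩` on the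
hypercube `{−1,+1}^n`. -/
noncomputable def isingKernel {n : ℕ} (W : Matrix (Fin n) (Fin n) ℝ) (b : Fin n → ℝ)
    (z z' : Fin n → Bool) : ℝ :=
  Real.exp (isingScore W b z' z) / ∑ u : Fin n → Bool, Real.exp (isingScore W b z' u)

/-- The normalisation constant `Z(z) = ∑_u exp⟨W z + b, u⟩`. -/
noncomputable def isingZ {n : ℕ} (W : Matrix (Fin n) (Fin n) ℝ) (b : Fin n → ℝ)
    (z : Fin n → Bool) : ℝ :=
  ∑ u : Fin n → Bool, Real.exp (isingScore W b z u)

section Aux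

variable {n : ℕ} (W : Matrix (Fin n) (Fin n) ℝ) (b : Fin n → ℝ)

lemma score_expand (z' z : Fin n → Bool) :
    isingScore W b z' z =
      (∑ k : Fin n, ∑ l : Fin n, W k l * pmVec z' l * pmVec z k)
        + ∑ k : Fin n, b k * pmVec z k := by
  unfold isingScore
  rw [← Finset.sum_add_distrib]
  refine Finset.sum_congr rfl fun k _ => ?_
  rw [add_mul, Finset.sum_mul]

lemma isingZ_pos (z : Fin n → Bool) : 0 < isingZ W b z := by
  unfold isingZ
  exact Finset.sum_pos (fun u _ => Real.exp_pos _) ⟨fun _ => true, Finset.mem_univ _⟩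

lemma sym_score_key (hW : W = W.transpose) (z z' : Fin n → Bool) :
    (∑ k : Fin n, b k * pmVec z' k) + isingScore W b z' z
      = (∑ k : Fin n, b k * pmVec z k) + isingScore W b z z' := by
  have hw : ∀ k l, W k l = W l k := fun k l => by
    conv_lhs => rw [hW]
    rfl
  rw [score_expand, score_expand]
  have hsum : (∑ k : Fin n, ∑ l : Fin n, W k l * pmVec z' l * pmVec z k)
      = ∑ k : Fin n, ∑ l : Fin n, W k l * pmVec z l * pmVec z' k := by
    rw [Finset.sum_comm]
    refine Finset.sum_congr rfl fun k _ => Finset.sum_congr rfl fun l _ => ?_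
    rw [hw l k]; ring
  rw [hsum]; ring

/-- The cocycle computation over the triangle `a → b → c → a`, where
`a = (1,…,1)`, `b` flips coordinate `i`, `c` flips coordinates `i` and `j`. -/
lemma double_ite_sum {n : ℕ} (p q : Fin n) (f : Fin n → Fin n → ℝ) :
    ∑ x : Fin n, ∑ y : Fin n, (if x = p then if y = q then f x y else 0 else 0) = f p q := by
  have h : ∀ x : Fin n,
      (∑ y : Fin n, if x = p then if y = q then f x y else 0 else 0)
        = if x = p then f x q else 0 := by
    intro x; by_cases hx : x = p <;> simp [hx, Finset.sum_ite_eq']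
  simp [h, Finset.sum_ite_eq']

lemma coeff_calc {n : ℕ} {i j : Fin n} (hij : i ≠ j) (w : ℝ) (k l : Fin n) :
    (w * 1 * (if k = i then -1 else 1)
      + w * (if l = i then -1 else 1) * (if k = j then -1 else if k = i then -1 else 1)
      + w * (if l = j then -1 else if l = i then -1 else 1) * 1
      - w * (if l = i then -1 else 1) * 1
      - w * (if l = j then -1 else if l = i then -1 else 1) * (if k = i then -1 else 1)
      - w * 1 * (if k = j then -1 else if k = i then -1 else 1))
    = (if k = j then (if l = i then 4 * w else 0) else 0)
      + (if k = i then (if l = j then -4 * w else 0) else 0) := by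
  split_ifs <;> subst_vars <;> first | ring1 | exact absurd rfl hij

lemma combination_key {i j : Fin n} (hij : i ≠ j)
    (h : isingScore W b (fun _ => true) (Function.update (fun _ => true) i false)
          + isingScore W b (Function.update (fun _ => true) i false)
              (Function.update (Function.update (fun _ => true) i false) j false)
          + isingScore W b (Function.update (Function.update (fun _ => true) i false) j false)
              (fun _ => true)
        = isingScore W b (Function.update (fun _ => true) i false) (fun _ => true)
          + isingScore W b (Function.update (Function.update (fun _ => true) i false) j false)
              (Function.update (fun _ => true) i false)
          + isingScore W b (fun _ => true)
              (Function.update (Function.update (fun _ => true) i false) j false)) :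
    W i j = W j i := by
  set za : Fin n → Bool := fun _ => true with hza
  set zb : Fin n → Bool := Function.update za i false with hzb
  set zc : Fin n → Bool := Function.update zb j false with hzc
  have hA : ∀ l, pmVec za l = 1 := fun l => by simp [pmVec, hza]
  have hB : ∀ l, pmVec zb l = if l = i then -1 else 1 := fun l => by
    by_cases hl : l = i <;> simp [pmVec, hzb, hza, Function.update, hl]
  have hC : ∀ l, pmVec zc l = if l = j then -1 else if l = i then -1 else 1 := fun l => by
    by_cases hl : l = j <;> by_cases hl' : l = i <;>
      simp [pmVec, hzc, hzb, hza, Function.update, hl, hl']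
  simp only [score_expand] at h
  have h2 : ∑ k : Fin n, ∑ l : Fin n,
      (W k l * pmVec za l * pmVec zb k + W k l * pmVec zb l * pmVec zc k
        + W k l * pmVec zc l * pmVec za k
        - W k l * pmVec zb l * pmVec za k - W k l * pmVec zc l * pmVec zb k
        - W k l * pmVec za l * pmVec zc k) = 0 := by
    simp only [sub_eq_add_neg, Finset.sum_add_distrib, Finset.sum_neg_distrib]
    linarith [h]
  have h3 : ∀ k l : Fin n,
      (W k l * pmVec za l * pmVec zb k + W k l * pmVec zb l * pmVec zc k
        + W k l * pmVec zc l * pmVec za k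
        - W k l * pmVec zb l * pmVec za k - W k l * pmVec zc l * pmVec zb k
        - W k l * pmVec za l * pmVec zc k)
      = (if k = j then (if l = i then 4 * W k l else 0) else 0)
        + (if k = i then (if l = j then -4 * W k l else 0) else 0) := by
    intro k l
    rw [hA, hA, hB, hB, hC, hC]
    exact coeff_calc hij (W k l) k l
  rw [Finset.sum_congr rfl fun k _ => Finset.sum_congr rfl fun l _ => h3 k l] at h2
  simp only [Finset.sum_add_distrib] at h2
  rw [double_ite_sum j i (fun x y => 4 * W x y),
    double_ite_sum i j (fun x y => -4 * W x y)] at h2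
  linarith [h2]

end Aux

/-- the log-linear Markov kernel
`p(z|z') = exp⟨W z' + b, z⟩ / ∑_u exp⟨W z' + b, u⟩` on the hypercube `{−1,+1}^n`
admits a strictly positive probability distribution `π` satisfying detailed balance
iff `W` is symmetric; moreover, when `W = Wᵀ`, the normalisation of
`π(z) ∝ Z(z) · exp⟨b, z⟩` with `Z(z) = ∑_u exp⟨W z + b, u⟩` is such a distribution. -/
theorem ising_detailed_balance_iff_symmetric
    (n : ℕ) (hn : 1 ≤ n) (W : Matrix (Fin n) (Fin n) ℝ) (b : Fin n → ℝ) :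
    ((∃ pdist : (Fin n → Bool) → ℝ,
        (∀ z, 0 < pdist z) ∧ (∑ z : Fin n → Bool, pdist z = 1) ∧
        (∀ z z' : Fin n → Bool,
          pdist z' * isingKernel W b z z' = pdist z * isingKernel W b z' z))
      ↔ W = W.transpose)
    ∧ (W = W.transpose →
        ∀ z z' : Fin n → Bool,
          ((isingZ W b z' * Real.exp (∑ i : Fin n, b i * pmVec z' i)) /
              ∑ u : Fin n → Bool, isingZ W b u * Real.exp (∑ i : Fin n, b i * pmVec u i)) *
            isingKernel W b z z'
          = ((isingZ W b z * Real.exp (∑ i : Fin n, b i * pmVec z i)) /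
              ∑ u : Fin n → Bool, isingZ W b u * Real.exp (∑ i : Fin n, b i * pmVec u i)) *
            isingKernel W b z' z) := by
  have hker : ∀ z z' : Fin n → Bool,
      isingKernel W b z z' = Real.exp (isingScore W b z' z) / isingZ W b z' :=
    fun _ _ => rfl
  have hZpos : ∀ u : Fin n → Bool, 0 < isingZ W b u := isingZ_pos W b
  have hμpos : ∀ u : Fin n → Bool,
      0 < isingZ W b u * Real.exp (∑ i : Fin n, b i * pmVec u i) :=
    fun u => mul_pos (hZpos u) (Real.exp_pos _)
  have hSpos : 0 < ∑ u : Fin n → Bool,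
      isingZ W b u * Real.exp (∑ i : Fin n, b i * pmVec u i) :=
    Finset.sum_pos (fun u _ => hμpos u) ⟨fun _ => true, Finset.mem_univ _⟩
  have hdb : W = W.transpose →
      ∀ z z' : Fin n → Bool,
        ((isingZ W b z' * Real.exp (∑ i : Fin n, b i * pmVec z' i)) /
            ∑ u : Fin n → Bool, isingZ W b u * Real.exp (∑ i : Fin n, b i * pmVec u i)) *
          isingKernel W b z z'
        = ((isingZ W b z * Real.exp (∑ i : Fin n, b i * pmVec z i)) /
            ∑ u : Fin n → Bool, isingZ W b u * Real.exp (∑ i : Fin n, b i * pmVec u i)) *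
          isingKernel W b z' z := by
    intro hW z z'
    have key := sym_score_key W b hW z z'
    rw [hker, hker, div_mul_div_comm, div_mul_div_comm,
      div_eq_div_iff (mul_ne_zero hSpos.ne' (hZpos z').ne')
        (mul_ne_zero hSpos.ne' (hZpos z).ne')]
    have e1 : Real.exp (∑ i : Fin n, b i * pmVec z' i) * Real.exp (isingScore W b z' z)
        = Real.exp (∑ i : Fin n, b i * pmVec z i) * Real.exp (isingScore W b z z') := by
      rw [← Real.exp_add, ← Real.exp_add, key]
    linear_combination (isingZ W b z * isingZ W b z' *
      ∑ u : Fin n → Bool, isingZ W b u * Real.exp (∑ i : Fin n, b i * pmVec u i)) * e1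
  refine ⟨⟨?_, ?_⟩, hdb⟩
  · rintro ⟨pdist, hpos, hsum, hbal⟩
    have G : ∀ z z' : Fin n → Bool,
        pdist z' * Real.exp (isingScore W b z' z) * isingZ W b z
          = pdist z * Real.exp (isingScore W b z z') * isingZ W b z' := by
      intro z z'
      have h := hbal z z'
      rw [hker, hker, ← mul_div_assoc, ← mul_div_assoc,
        div_eq_div_iff (hZpos z').ne' (hZpos z).ne'] at h
      exact h
    ext i j
    rw [Matrix.transpose_apply]
    rcases eq_or_ne i j with hij | hij
    · rw [hij]
    · set A : Fin n → Bool := fun _ => true with hA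
      set B : Fin n → Bool := Function.update A i false with hB
      set C : Fin n → Bool := Function.update B j false with hC
      have g1 := G B A
      have g2 := G C B
      have g3 := G A C
      have gm : (pdist A * Real.exp (isingScore W b A B) * isingZ W b B) *
          ((pdist B * Real.exp (isingScore W b B C) * isingZ W b C) *
            (pdist C * Real.exp (isingScore W b C A) * isingZ W b A))
          = (pdist B * Real.exp (isingScore W b B A) * isingZ W b A) *
          ((pdist C * Real.exp (isingScore W b C B) * isingZ W b B) *
            (pdist A * Real.exp (isingScore W b A C) * isingZ W b C)) := by
        rw [g1, g2, g3]
      have hexp : Real.exp (isingScore W b A B + isingScore W b B C + isingScore W b C A)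
          = Real.exp (isingScore W b B A + isingScore W b C B + isingScore W b A C) := by
        have hne : pdist A * pdist B * pdist C * (isingZ W b A * isingZ W b B * isingZ W b C)
            ≠ 0 :=
          (mul_pos (mul_pos (mul_pos (hpos A) (hpos B)) (hpos C))
            (mul_pos (mul_pos (hZpos A) (hZpos B)) (hZpos C))).ne'
        apply mul_left_cancel₀ hne
        rw [Real.exp_add, Real.exp_add, Real.exp_add, Real.exp_add]
        linear_combination gm
      exact combination_key W b hij (Real.exp_injective hexp)
  · intro hW
    refine ⟨fun u => (isingZ W b u * Real.exp (∑ i : Fin n, b i * pmVec u i)) /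
        ∑ u : Fin n → Bool, isingZ W b u * Real.exp (∑ i : Fin n, b i * pmVec u i),
      fun u => div_pos (hμpos u) hSpos, ?_, hdb hW⟩
    rw [← Finset.sum_div, div_self hSpos.ne']
end
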